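/- In linear regression transfer learning with Gaussian data, the regret R(S,T) = L_T(f*_S) − L_T(f*_T) is bounded below by the Wasserstein-based transfer risk C_W(S,T) = W₂(P_{ST}, P_T)², where P_{ST} = Law(f*_S(X_T)) and P_T = Law(f*_T(X_T)). Concretely: for source and target jointly Gaussian data (X_·, Y_·) ∼ N(μ_·, Σ_·) on ℝ^d × ℝ with invertible input covariances, letting w_· = Σ_{·,X}^{-1}Σ_{·,XY}, b_· = μ_{·,Y} − Σ_{·,YX}Σ_{·,X}^{-1}μ_{·,X}, and f*_·(x)=w_·^⊤x+b_·, one has [μ_{T,Y} − μ_{S,Y} − Σ_{S,YX}Σ_{S,X}^{-1}(μ_{T,X}−μ_{S,X})]² + (√(w_S^⊤Σ_{T,X}w_S) − √(w_T^⊤Σ_{T,X}w_T))² ≤ ‖Σ_{T,X}^{1/2}(w_T − w_S)‖² + [μ_{T,Y} − μ_{S,Y} − Σ_{S,YX}Σ_{S,X}^{-1}(μ_{T,X}−μ_{S,X})]². -/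

import Mathlib

/-! Writing `a = Σ_{T,X}^{1/2} w_S` and `b = Σ_{T,X}^{1/2} w_T`, the quadratic forms
`w^⊤ Σ_{T,X} w` become `‖a‖²` and `‖b‖²`; the bias terms cancel, and what remains is the reverse
triangle inequality `(‖a‖ - ‖b‖)² ≤ ‖b - a‖²`, i.e. Cauchy–Schwarz. -/

open Matrix

section

open scoped ComplexOrder

/-- The square root of a positive semidefinite matrix, as defined in Mathlib (Dec 2024)
under the name `Matrix.PosSemidef.sqrt` (removed since). -/
noncomputable def Matrix.PosSemidef.sqrt {n : Type*} [Fintype n] [DecidableEq n] {𝕜 : Type*}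
    [RCLike 𝕜] {A : Matrix n n 𝕜} (hA : A.PosSemidef) : Matrix n n 𝕜 :=
  hA.1.eigenvectorUnitary.1 * diagonal ((↑) ∘ (√·) ∘ hA.1.eigenvalues) *
    (star hA.1.eigenvectorUnitary : Matrix n n 𝕜)

end

namespace Matrix

section DotProduct

variable {n : Type*} [Fintype n]

theorem dotProduct_le_sqrt_mul_sqrt (u v : n → ℝ) : u ⬝ᵥ v ≤ √(u ⬝ᵥ u) * √(v ⬝ᵥ v) := by
  simpa [dotProduct, sq] using Real.sum_mul_le_sqrt_mul_sqrt Finset.univ u v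

theorem sq_sqrt_dotProduct_self_sub_le (u v : n → ℝ) :
    (√(u ⬝ᵥ u) - √(v ⬝ᵥ v)) ^ 2 ≤ (v - u) ⬝ᵥ (v - u) := by
  have hcs := dotProduct_le_sqrt_mul_sqrt u v
  have expand : (v - u) ⬝ᵥ (v - u) = u ⬝ᵥ u + v ⬝ᵥ v - 2 * (u ⬝ᵥ v) := by
    simp only [sub_dotProduct, dotProduct_sub, dotProduct_comm v u]
    ring
  rw [sub_sq, Real.sq_sqrt (by simpa using dotProduct_star_self_nonneg u),
    Real.sq_sqrt (by simpa using dotProduct_star_self_nonneg v), expand]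
  linarith

end DotProduct

namespace PosSemidef

open scoped ComplexOrder

variable {n : Type*} [Fintype n] [DecidableEq n]

theorem sqrt_mul_self {𝕜 : Type*} [RCLike 𝕜] {A : Matrix n n 𝕜} (hA : A.PosSemidef) :
    hA.sqrt * hA.sqrt = A := by
  conv_rhs => rw [hA.1.spectral_theorem, Unitary.conjStarAlgAut_apply]
  have hU : (star hA.1.eigenvectorUnitary : Matrix n n 𝕜) * hA.1.eigenvectorUnitary.1 = 1 :=
    Unitary.coe_star_mul_self _
  simp only [sqrt, mul_assoc]
  rw [← mul_assoc _ hA.1.eigenvectorUnitary.1, hU, one_mul, ← mul_assoc (diagonal _),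
    diagonal_mul_diagonal]
  congr 3
  funext i
  simp [← RCLike.ofReal_mul, Real.mul_self_sqrt (hA.eigenvalues_nonneg i)]

theorem conjTranspose_sqrt {𝕜 : Type*} [RCLike 𝕜] {A : Matrix n n 𝕜} (hA : A.PosSemidef) :
    hA.sqrtᴴ = hA.sqrt := by
  simp [sqrt, Matrix.mul_assoc, Matrix.star_eq_conjTranspose, Pi.star_def, Function.comp_def]

theorem dotProduct_mulVec_eq_sqrt {A : Matrix n n ℝ} (hA : A.PosSemidef) (v : n → ℝ) :
    v ⬝ᵥ A *ᵥ v = hA.sqrt *ᵥ v ⬝ᵥ hA.sqrt *ᵥ v := by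
  have hsymm : hA.sqrtᵀ = hA.sqrt := by
    simpa [conjTranspose_eq_transpose_of_trivial] using hA.conjTranspose_sqrt
  conv_lhs => rw [← hA.sqrt_mul_self, ← mulVec_mulVec, dotProduct_mulVec, ← hsymm,
    vecMul_transpose, hsymm]

end PosSemidef

end Matrix

theorem transfer_risk_le_regret_general {d : ℕ}
    (μSX μTX : Fin d → ℝ) (μSY μTY : ℝ)
    (SSX STX : Matrix (Fin d) (Fin d) ℝ) (hSTX : STX.PosDef)
    (SSXY : Fin d → ℝ)
    (wS wT : Fin d → ℝ) :
    (μTY - μSY - SSXY ⬝ᵥ SSX⁻¹.mulVec (μTX - μSX)) ^ 2 +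
        (Real.sqrt (wS ⬝ᵥ STX.mulVec wS) - Real.sqrt (wT ⬝ᵥ STX.mulVec wT)) ^ 2 ≤
      (hSTX.posSemidef.sqrt.mulVec (wT - wS)) ⬝ᵥ (hSTX.posSemidef.sqrt.mulVec (wT - wS)) +
        (μTY - μSY - SSXY ⬝ᵥ SSX⁻¹.mulVec (μTX - μSX)) ^ 2 := by
  rw [hSTX.posSemidef.dotProduct_mulVec_eq_sqrt, hSTX.posSemidef.dotProduct_mulVec_eq_sqrt,
    mulVec_sub _ wT wS, add_comm (_ ⬝ᵥ _)]
  gcongr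
  exact sq_sqrt_dotProduct_self_sub_le _ _

/-- In Gaussian linear-regression transfer learning, the Wasserstein-based transfer risk
(left side, `W₂(P_ST, P_T)²`) is bounded above by the regret (right side,
`R(S,T) = ‖Σ_{T,X}^{1/2}(w_T − w_S)‖² + bias²`). -/
theorem transfer_risk_le_regret {d : ℕ}
    (μSX μTX : Fin d → ℝ) (μSY μTY : ℝ)
    (SSX STX : Matrix (Fin d) (Fin d) ℝ) (hSSX : SSX.PosDef) (hSTX : STX.PosDef)
    (SSXY STXY : Fin d → ℝ)
    (wS wT : Fin d → ℝ) (hwS : wS = SSX⁻¹.mulVec SSXY) (hwT : wT = STX⁻¹.mulVec STXY) :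
    (μTY - μSY - SSXY ⬝ᵥ SSX⁻¹.mulVec (μTX - μSX)) ^ 2 +
        (Real.sqrt (wS ⬝ᵥ STX.mulVec wS) - Real.sqrt (wT ⬝ᵥ STX.mulVec wT)) ^ 2 ≤
      (hSTX.posSemidef.sqrt.mulVec (wT - wS)) ⬝ᵥ (hSTX.posSemidef.sqrt.mulVec (wT - wS)) +
        (μTY - μSY - SSXY ⬝ᵥ SSX⁻¹.mulVec (μTX - μSX)) ^ 2 :=
  transfer_risk_le_regret_general μSX μTX μSY μTY SSX STX hSTX SSXY wS wT
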